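/- For every probability measure μ on ℝ^m, the halfspace depth function θ ↦ α_μ(θ) = inf_{c ∈ ℝ^m, c ≠ 0} μ({x ∈ ℝ^m : ⟨c, x − θ⟩ ≤ 0}) is quasi-concave, i.e., its superlevel sets {θ : α_μ(θ) ≥ t} are convex for every t. -/
import Mathlib


open MeasureTheory
open scoped ENNReal RealInnerProductSpace

/-- The halfspace depth of `θ ∈ ℝ^m` with respect to a Borel probability measure `μ`. -/
noncomputable def halfspaceDepth {m : ℕ} (μ : Measure (EuclideanSpace ℝ (Fin m)))
    (θ : EuclideanSpace ℝ (Fin m)) : ℝ≥0∞ :=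
  ⨅ (c : EuclideanSpace ℝ (Fin m)) (_ : c ≠ 0), μ {x | ⟪c, x - θ⟫ ≤ 0}

/-- For every probability measure `μ` on `ℝ^m`, the halfspace depth function is quasi-concave:
all its superlevel sets are convex. -/
theorem halfspaceDepth_quasiConcave {m : ℕ} (μ : Measure (EuclideanSpace ℝ (Fin m)))
    [IsProbabilityMeasure μ] (t : ℝ≥0∞) :
    Convex ℝ {θ | t ≤ halfspaceDepth μ θ} := by
  intro θ₁ h₁ θ₂ h₂ a b ha hb hab
  simp only [Set.mem_setOf_eq, halfspaceDepth, le_iInf_iff] at *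
  intro c hc
  rcases le_total ⟪c, θ₁⟫ ⟪c, θ₂⟫ with h | h
  · refine le_trans (h₁ c hc) (measure_mono fun x hx => ?_)
    simp only [Set.mem_setOf_eq, inner_sub_right, inner_add_right,
      real_inner_smul_right] at *
    have ha' : a = 1 - b := by linarith
    have key : a * ⟪c, θ₁⟫ + b * ⟪c, θ₂⟫ - ⟪c, θ₁⟫ = b * (⟪c, θ₂⟫ - ⟪c, θ₁⟫) := by
      rw [ha']; ring
    linarith [mul_nonneg hb (sub_nonneg.2 h)]
  · refine le_trans (h₂ c hc) (measure_mono fun x hx => ?_)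
    simp only [Set.mem_setOf_eq, inner_sub_right, inner_add_right,
      real_inner_smul_right] at *
    have hb' : b = 1 - a := by linarith
    have key : a * ⟪c, θ₁⟫ + b * ⟪c, θ₂⟫ - ⟪c, θ₂⟫ = a * (⟪c, θ₁⟫ - ⟪c, θ₂⟫) := by
      rw [hb']; ring
    linarith [mul_nonneg ha (sub_nonneg.2 h)]
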